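/- arXiv:2308.01199 — 4 statements merged into one kernel-verified Lean document; each statement's English description precedes it below -/
import Mathlib

section
/- Let G be a weighted graph, P a set of portals, C a cluster of strong diameter at most Δ, and for each portal p define g_v(p) = δ_p − d_G(v,p) for shift values δ_p ≥ 0. If for some vertex v ∈ C and portal p_v we have g_v(p_v) ≥ 2Δ + g_v(p') for all portals p' ≠ p_v, then for every vertex u in any cluster C' (of strong diameter ≤ Δ) intersecting a shortest path from v to p_v, the portal p_v maximizes g_u, i.e., g_u(p_v) ≥ g_u(p') for all p'. -/
/-- If g_v(p_v) = δ_{p_v} − d(v,p_v) beats every other g_v(p') by at least 2Δ,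
    then for every vertex u in a cluster of strong diameter ≤ Δ intersecting a shortest
    path from v to p_v (at a point z, with d(u,z) ≤ Δ), p_v maximizes g_u. -/
theorem stmt4 {V : Type*} (d : V → V → ℝ) (δ : V → ℝ)
    (hsymm : ∀ x y, d x y = d y x)
    (htri : ∀ x y z, d x z ≤ d x y + d y z)
    (hδ : ∀ p, 0 ≤ δ p)
    (P : Set V) (Δ : ℝ) (v pv : V) (hpv : pv ∈ P)
    (hmax : ∀ p' ∈ P, p' ≠ pv → 2 * Δ + (δ p' - d v p') ≤ δ pv - d v pv)
    (z u : V)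
    (hz : d v z + d z pv = d v pv)   -- z lies on a shortest path from v to pv
    (huz : d u z ≤ Δ) :              -- u and z lie in a common cluster of diameter ≤ Δ
    ∀ p' ∈ P, δ p' - d u p' ≤ δ pv - d u pv := by
  intro p' hp'
  by_cases h : p' = pv
  · subst h; linarith
  · have h1 := hmax p' hp' h
    have h2 : d v p' ≤ d v u + d u p' := htri v u p'
    have h3 : d u pv ≤ d u z + d z pv := htri u z pv
    have h4 : d v u ≤ d v z + d z u := htri v z u
    have h5 : d z u = d u z := hsymm z u
    linarith
end

section
/- Every instance of cluster aggregation on a weighted tree with input partition into connected clusters of strong diameter at most Δ admits a solution with additive distortion at most 4Δ: there is an assignment f from clusters to portals such that every vertex v satisfies d_{T[f^{-1}(f(v))]}(v, f(v)) ≤ d_T(v, P) + 4Δ, and each f^{-1}(p) induces a connected subtree. -/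
/-- Cost of a walk (list of vertices) in a weighted graph with weights `w`. -/
noncomputable def walkCost {V : Type*} (w : V → V → ENNReal) : List V → ENNReal
  | [] => 0
  | [_] => 0
  | a :: b :: l => w a b + walkCost w (b :: l)

/-- `l` is a walk from `u` to `v` staying inside the vertex set `S`. -/
def IsWalkIn {V : Type*} (S : Set V) (u v : V) (l : List V) : Prop :=
  l.head? = some u ∧ l.getLast? = some v ∧ ∀ x ∈ l, x ∈ S

/-- Shortest-path distance between `u` and `v` in the subgraph induced on `S`
    of the weighted graph with weights `w` (⊤ if there is no walk). -/
noncomputable def gdist {V : Type*} (w : V → V → ENNReal) (S : Set V) (u v : V) : ENNReal :=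
  ⨅ (l : List V) (_ : IsWalkIn S u v l), walkCost w l

/-!
Root the tree at a portal, and call a vertex *down* if one of its nearest portals lies in its
subtree. For a cluster with top vertex `t` (the member closest to the root), its entry cost is the
least `d(t, y) + d(y, P)` over its down members `y`; the cluster is *grounded* if this is at most
`d(t, P) + 2Δ`. A grounded cluster follows the descending path from the optimal `y` to its portal:
it takes that portal if the portal is in the cluster, and otherwise the assignment of the cluster
where the path first leaves it. That cluster has a down top, so it is grounded as well. A cluster
that is not grounded takes the assignment of the cluster of the parent of `t`.

By induction along this recursion, `t` reaches its portal inside the coarse cluster at cost at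
most `min (entry cost) (d(t, P) + 2Δ)`. For any member `v`, the climb to `t` plus this bound is at
most `d(v, P) + 2Δ`: the shortest path from `v` to `P` either passes through `t` or turns down at
a down member of the cluster. So the additive distortion is in fact at most `2Δ`.
-/

open SimpleGraph

section WalkCost

variable {V : Type*} (w : V → V → ENNReal)

theorem walkCost_append_of_getLast? {l₁ : List V} {z : V} (h : l₁.getLast? = some z)
    (l₂ : List V) : walkCost w (l₁ ++ l₂) = walkCost w l₁ + walkCost w (z :: l₂) := by
  induction l₁ with
  | nil => simp at h
  | cons a t ih =>
    cases t with
    | nil =>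
      obtain rfl : a = z := by simpa using h
      simp [walkCost]
    | cons b t =>
      rw [List.getLast?_cons_cons] at h
      simp only [List.cons_append, walkCost] at ih ⊢
      rw [ih h, add_assoc]

theorem gdist_le_walkCost_add {S : Set V} {u z v : V} {l : List V} (hl : IsWalkIn S u z l) :
    gdist w S u v ≤ walkCost w l + gdist w S z v := by
  simp only [gdist, ENNReal.add_iInf]
  refine le_iInf₂ fun m hm => ?_
  obtain ⟨hmz, hmv, hmS⟩ := hm
  obtain ⟨t, rfl⟩ : ∃ t, m = z :: t := by
    cases m with
    | nil => simp at hmz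
    | cons a t => exact ⟨t, by simpa using hmz⟩
  have hlast : l.getLast? = some z := hl.2.1
  refine (iInf₂_le (l ++ t) ⟨?_, ?_, ?_⟩).trans (walkCost_append_of_getLast? w hlast t).le
  · cases l with
    | nil => simp at hlast
    | cons a l => simpa using hl.1
  · cases t with
    | nil => simpa [hlast] using hmv
    | cons b t => rw [List.getLast?_append]; simpa using hmv
  · intro x hx
    rcases List.mem_append.mp hx with hx | hx
    · exact hl.2.2 x hx
    · exact hmS x (List.mem_cons_of_mem _ hx)

end WalkCost

structure WeightedTree (V : Type*) where
  graph : SimpleGraph V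
  isTree : graph.IsTree
  weight : V → V → ENNReal
  weight_eq_top : ∀ u v, ¬ graph.Adj u v → weight u v = ⊤
  weight_lt_top : ∀ u v, graph.Adj u v → weight u v < ⊤

namespace WeightedTree

variable {V : Type*} (W : WeightedTree V)

noncomputable def cost {u v : V} (p : W.graph.Walk u v) : ENNReal :=
  (p.darts.map fun d => W.weight d.fst d.snd).sum

@[simp] theorem cost_nil {u : V} : W.cost (Walk.nil : W.graph.Walk u u) = 0 := by
  simp [cost]

@[simp] theorem cost_cons {u v x : V} (h : W.graph.Adj u x) (p : W.graph.Walk x v) :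
    W.cost (Walk.cons h p) = W.weight u x + W.cost p := by
  simp [cost]

theorem cost_append {u v x : V} (p : W.graph.Walk u x) (q : W.graph.Walk x v) :
    W.cost (p.append q) = W.cost p + W.cost q := by
  simp [cost, Walk.darts_append]

theorem cost_lt_top {u v : V} (p : W.graph.Walk u v) : W.cost p < ⊤ := by
  induction p with
  | nil => simp
  | cons h p ih => simpa using ENNReal.add_lt_top.mpr ⟨W.weight_lt_top _ _ h, ih⟩

theorem walkCost_support {u v : V} (p : W.graph.Walk u v) :
    walkCost W.weight p.support = W.cost p := by
  induction p with
  | nil => simp [walkCost]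
  | cons h p ih =>
    rw [Walk.support_cons, cost_cons, ← ih, ← p.cons_tail_support]
    rfl

theorem cost_bypass_le [DecidableEq V] {u v : V} (p : W.graph.Walk u v) :
    W.cost p.bypass ≤ W.cost p := by
  obtain ⟨l, hperm, hsub⟩ := List.subperm_of_subset
    (Walk.darts_nodup_of_support_nodup p.bypass_isPath.support_nodup)
    p.darts_bypass_subset_darts
  rw [cost, cost, ← (hperm.map _).sum_eq]
  exact (hsub.map _).sum_le_sum fun _ _ => zero_le

theorem isWalkIn_support {S : Set V} {u v : V} {p : W.graph.Walk u v}
    (hp : ∀ x ∈ p.support, x ∈ S) : IsWalkIn S u v p.support :=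
  ⟨by cases p <;> simp,
    by rw [List.getLast?_eq_some_getLast p.support_ne_nil, Walk.getLast_support], hp⟩

theorem gdist_le_cost_add {S : Set V} {u z : V} (v : V) {p : W.graph.Walk u z}
    (hp : ∀ x ∈ p.support, x ∈ S) :
    gdist W.weight S u v ≤ W.cost p + gdist W.weight S z v := by
  simpa [walkCost_support] using gdist_le_walkCost_add W.weight (v := v) (W.isWalkIn_support hp)

theorem gdist_le_cost {S : Set V} {u v : V} {p : W.graph.Walk u v}
    (hp : ∀ x ∈ p.support, x ∈ S) : gdist W.weight S u v ≤ W.cost p :=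
  (iInf₂_le _ (W.isWalkIn_support hp)).trans (W.walkCost_support p).le

theorem exists_walk_support_eq {S : Set V} {l : List V} :
    ∀ {u v : V}, IsWalkIn S u v l → walkCost W.weight l ≠ ⊤ →
      ∃ p : W.graph.Walk u v, p.support = l := by
  induction l with
  | nil => intro u v h; simp [IsWalkIn] at h
  | cons a t ih =>
    intro u v h hcost
    obtain rfl : a = u := by simpa using h.1
    cases t with
    | nil =>
      obtain rfl : a = v := by simpa using h.2.1
      exact ⟨Walk.nil, rfl⟩
    | cons b t =>
      have hcost' : W.weight a b + walkCost W.weight (b :: t) ≠ ⊤ := hcost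
      have hadj : W.graph.Adj a b := by
        by_contra hab
        simp [W.weight_eq_top _ _ hab] at hcost'
      have hwalk : IsWalkIn S b v (b :: t) :=
        ⟨rfl, by simpa using h.2.1, fun x hx => h.2.2 x (List.mem_cons_of_mem _ hx)⟩
      obtain ⟨p, hp⟩ := ih hwalk (ENNReal.add_ne_top.mp hcost').2
      exact ⟨Walk.cons hadj p, by simp [hp]⟩

noncomputable def path (u v : V) : W.graph.Walk u v :=
  (W.isTree.existsUnique_path u v).choose

theorem isPath_path (u v : V) : (W.path u v).IsPath :=
  (W.isTree.existsUnique_path u v).choose_spec.1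

theorem eq_path {u v : V} {p : W.graph.Walk u v} (hp : p.IsPath) : p = W.path u v :=
  (W.isTree.existsUnique_path u v).choose_spec.2 p hp

theorem path_reverse (u v : V) : (W.path u v).reverse = W.path v u :=
  W.eq_path (W.isPath_path u v).reverse

theorem mem_support_path_comm {u v z : V} :
    z ∈ (W.path u v).support ↔ z ∈ (W.path v u).support := by
  rw [← W.path_reverse u v, Walk.support_reverse, List.mem_reverse]

theorem path_eq_append_of_mem {u v z : V} (hz : z ∈ (W.path u v).support) :
    W.path u v = (W.path u z).append (W.path z v) := by
  classical
  have hp := W.isPath_path u v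
  rw [← W.eq_path (hp.takeUntil hz), ← W.eq_path (hp.dropUntil hz), Walk.take_spec]

noncomputable def dist (u v : V) : ENNReal := W.cost (W.path u v)

theorem dist_eq_add_of_mem {u v z : V} (hz : z ∈ (W.path u v).support) :
    W.dist u v = W.dist u z + W.dist z v := by
  rw [dist, W.path_eq_append_of_mem hz, cost_append, dist, dist]

theorem dist_self (u : V) : W.dist u u = 0 := by
  rw [dist, ← W.eq_path Walk.IsPath.nil, cost_nil]

theorem dist_of_adj {u v : V} (h : W.graph.Adj u v) : W.dist u v = W.weight u v := by
  rw [dist, ← W.eq_path (p := Walk.cons h Walk.nil) (by simp [h.ne]), cost_cons, cost_nil,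
    add_zero]

theorem dist_lt_top (u v : V) : W.dist u v < ⊤ := W.cost_lt_top _

theorem dist_le_cost {u v : V} (p : W.graph.Walk u v) : W.dist u v ≤ W.cost p := by
  classical
  rw [dist, ← W.eq_path p.bypass_isPath]
  exact W.cost_bypass_le p

theorem dist_triangle (u x v : V) : W.dist u v ≤ W.dist u x + W.dist x v :=
  (W.dist_le_cost _).trans (W.cost_append _ _).le

theorem dist_le_gdist (S : Set V) (u v : V) : W.dist u v ≤ gdist W.weight S u v := by
  refine le_iInf₂ fun l hl => ?_
  by_cases hcost : walkCost W.weight l = ⊤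
  · simp [hcost]
  obtain ⟨p, rfl⟩ := W.exists_walk_support_eq hl hcost
  exact (W.dist_le_cost p).trans (W.walkCost_support p).ge

theorem support_path_subset_of_gdist_ne_top {S : Set V} {u v : V}
    (h : gdist W.weight S u v ≠ ⊤) : ∀ z ∈ (W.path u v).support, z ∈ S := by
  classical
  obtain ⟨l, hl, hcost⟩ : ∃ l, IsWalkIn S u v l ∧ walkCost W.weight l ≠ ⊤ := by
    by_contra! hall
    exact h (by simpa [gdist] using hall)
  obtain ⟨p, rfl⟩ := W.exists_walk_support_eq hl hcost
  intro z hz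
  rw [← W.eq_path p.bypass_isPath] at hz
  exact hl.2.2 z (p.support_bypass_subset_support hz)

end WeightedTree

structure RootedWeightedTree (V : Type*) extends WeightedTree V where
  root : V

namespace RootedWeightedTree

variable {V : Type*} (R : RootedWeightedTree V)

def IsAncestor (z v : V) : Prop := z ∈ (R.path v R.root).support

noncomputable def depth (v : V) : ℕ := (R.path v R.root).length

noncomputable def parent (v : V) : V := (R.path v R.root).getVert 1

variable {R}

theorem depth_lt_card [Finite V] (v : V) : R.depth v < Nat.card V := by
  have := Fintype.ofFinite V
  rw [Nat.card_eq_fintype_card]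
  exact (R.isPath_path v R.root).length_lt

theorem isAncestor_refl (v : V) : R.IsAncestor v v := Walk.start_mem_support _

theorem isAncestor_root (v : V) : R.IsAncestor R.root v := Walk.end_mem_support _

theorem path_root_eq_append {z v : V} (h : R.IsAncestor z v) :
    R.path v R.root = (R.path v z).append (R.path z R.root) :=
  R.path_eq_append_of_mem h

theorem depth_eq_length_add {z v : V} (h : R.IsAncestor z v) :
    R.depth v = (R.path v z).length + R.depth z := by
  rw [depth, path_root_eq_append h, Walk.length_append, depth]

theorem depth_le_of_isAncestor {z v : V} (h : R.IsAncestor z v) : R.depth z ≤ R.depth v := by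
  rw [depth_eq_length_add h]; omega

theorem eq_of_isAncestor_of_depth_le {z v : V} (h : R.IsAncestor z v)
    (hd : R.depth v ≤ R.depth z) : z = v :=
  (Walk.eq_of_length_eq_zero (p := R.path v z) (by rw [depth_eq_length_add h] at hd; omega)).symm

theorem depth_lt_of_isAncestor {z v : V} (h : R.IsAncestor z v) (hne : z ≠ v) :
    R.depth z < R.depth v :=
  lt_of_not_ge fun hd => hne (eq_of_isAncestor_of_depth_le h hd)

theorem isAncestor_trans {y z v : V} (hzv : R.IsAncestor z v) (hyz : R.IsAncestor y z) :
    R.IsAncestor y v := by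
  rw [IsAncestor, path_root_eq_append hzv, Walk.mem_support_append_iff]
  exact Or.inr hyz

theorem isAncestor_of_mem_support_path {z v x : V} (h : R.IsAncestor z v)
    (hx : x ∈ (R.path v z).support) : R.IsAncestor z x ∧ R.IsAncestor x v := by
  have hsplit : R.path v R.root =
      (R.path v x).append ((R.path x z).append (R.path z R.root)) := by
    rw [path_root_eq_append h, R.path_eq_append_of_mem hx, Walk.append_assoc]
  have hsuffix := R.eq_path ((hsplit ▸ R.isPath_path v R.root).of_append_right)
  refine ⟨?_, ?_⟩
  · rw [IsAncestor, ← hsuffix, Walk.mem_support_append_iff]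
    exact Or.inr (Walk.start_mem_support _)
  · rw [IsAncestor, path_root_eq_append h, Walk.mem_support_append_iff]
    exact Or.inl hx

theorem isAncestor_total {z₁ z₂ v : V} (h₁ : R.IsAncestor z₁ v)
    (h₂ : R.IsAncestor z₂ v) :
    R.IsAncestor z₁ z₂ ∨ R.IsAncestor z₂ z₁ := by
  rw [IsAncestor, path_root_eq_append h₁, Walk.mem_support_append_iff] at h₂
  exact h₂.imp (fun h => (isAncestor_of_mem_support_path h₁ h).1) id

theorem mem_support_path_of_isAncestor {y z v : V} (hzv : R.IsAncestor z v)
    (hyz : R.IsAncestor y z) : z ∈ (R.path v y).support := by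
  have hsplit : R.path v R.root =
      ((R.path v z).append (R.path z y)).append (R.path y R.root) := by
    rw [path_root_eq_append hzv, path_root_eq_append hyz, Walk.append_assoc]
  rw [← R.eq_path ((hsplit ▸ R.isPath_path v R.root).of_append_left),
    Walk.mem_support_append_iff]
  exact Or.inl (Walk.end_mem_support _)

theorem dist_eq_add_of_isAncestor {y z v : V} (hzv : R.IsAncestor z v)
    (hyz : R.IsAncestor y z) : R.dist v y = R.dist v z + R.dist z y :=
  R.dist_eq_add_of_mem (mem_support_path_of_isAncestor hzv hyz)

theorem dist_eq_add_of_isAncestor' {y z v : V} (hzv : R.IsAncestor z v)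
    (hyz : R.IsAncestor y z) : R.dist y v = R.dist y z + R.dist z v :=
  R.dist_eq_add_of_mem (R.mem_support_path_comm.mp (mem_support_path_of_isAncestor hzv hyz))

theorem path_root_eq_cons {v : V} (hv : v ≠ R.root) :
    ∃ h : R.graph.Adj v (R.parent v),
      R.path v R.root = Walk.cons h (R.path (R.parent v) R.root) := by
  rcases hp : R.path v R.root with _ | ⟨h, q⟩
  · exact absurd rfl hv
  · rename_i c
    have hparent : R.parent v = c := by
      rw [parent, hp, Walk.getVert_cons_succ, Walk.getVert_zero]
    have hq : q = R.path c R.root := R.eq_path (hp ▸ R.isPath_path v R.root).of_cons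
    subst hparent hq
    exact ⟨h, rfl⟩

theorem isAncestor_parent (v : V) : R.IsAncestor (R.parent v) v :=
  Walk.getVert_mem_support _ _

theorem depth_parent {v : V} (hv : v ≠ R.root) : R.depth v = R.depth (R.parent v) + 1 := by
  obtain ⟨h, hp⟩ := path_root_eq_cons hv
  rw [depth, hp, Walk.length_cons, depth]

theorem ne_root_of_not_isAncestor {v x : V} (h : ¬ R.IsAncestor v x) : v ≠ R.root :=
  fun hv => h (hv ▸ isAncestor_root x)

theorem parent_mem_support_path {v x : V} (h : ¬ R.IsAncestor v x) :
    R.parent v ∈ (R.path v x).support := by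
  classical
  obtain ⟨hadj, hroot⟩ := path_root_eq_cons (ne_root_of_not_isAncestor h)
  by_cases hpx : R.IsAncestor (R.parent v) x
  · have hv : v ∉ (R.path (R.parent v) x).support := fun hv =>
      h (isAncestor_of_mem_support_path hpx (R.mem_support_path_comm.mp hv)).2
    rw [← R.eq_path ((R.isPath_path _ x).cons hv (h := hadj))]
    simp
  · have hmem : R.parent v ∈ ((R.path v x).append (R.path x R.root)).bypass.support := by
      rw [R.eq_path ((R.path v x).append (R.path x R.root)).bypass_isPath, hroot]
      simp
    rcases (Walk.mem_support_append_iff _ _).mp (Walk.support_bypass_subset_support _ hmem)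
      with h' | h'
    · exact h'
    · exact absurd h' hpx

theorem isAncestor_of_forall_depth_le {A : Set V} {t : V}
    (hmin : ∀ x ∈ A, R.depth t ≤ R.depth x)
    (hconv : ∀ x ∈ A, ∀ z ∈ (R.path x t).support, z ∈ A) {x : V} (hx : x ∈ A) :
    R.IsAncestor t x := by
  induction hd : R.depth x using Nat.strong_induction_on generalizing x with
  | _ n ih =>
    by_cases hxt : R.IsAncestor x t
    · rw [eq_of_isAncestor_of_depth_le hxt (hmin x hx)]
      exact isAncestor_refl t
    · have hxr := ne_root_of_not_isAncestor hxt
      have hpA := hconv x hx _ (parent_mem_support_path hxt)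
      exact isAncestor_trans (isAncestor_parent x)
        (ih _ (by rw [← hd, depth_parent hxr]; omega) hpA rfl)

end RootedWeightedTree

structure PortalTree (V : Type*) extends RootedWeightedTree V where
  portals : Set V
  root_mem : root ∈ portals

namespace PortalTree

open RootedWeightedTree

variable {V : Type*} (T : PortalTree V)

noncomputable def portalDist (v : V) : ENNReal := ⨅ p ∈ T.portals, T.dist v p

def HasNearestPortalBelow (v : V) : Prop :=
  ∃ q ∈ T.portals, T.IsAncestor v q ∧ T.dist v q = T.portalDist v

variable {T}

theorem portalDist_le_dist {v p : V} (hp : p ∈ T.portals) : T.portalDist v ≤ T.dist v p :=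
  iInf₂_le p hp

theorem portalDist_lt_top (v : V) : T.portalDist v < ⊤ :=
  (portalDist_le_dist T.root_mem).trans_lt (T.dist_lt_top _ _)

theorem exists_portalDist_eq [Finite V] (v : V) :
    ∃ p ∈ T.portals, T.portalDist v = T.dist v p := by
  obtain ⟨p, hp, hmin⟩ :=
    Set.exists_min_image T.portals (T.dist v) T.portals.toFinite ⟨_, T.root_mem⟩
  exact ⟨p, hp, le_antisymm (portalDist_le_dist hp) (le_iInf₂ hmin)⟩

theorem portalDist_le_dist_add [Finite V] (v u : V) :
    T.portalDist v ≤ T.dist v u + T.portalDist u := by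
  obtain ⟨p, hp, hu⟩ := exists_portalDist_eq (T := T) u
  rw [hu]
  exact (portalDist_le_dist hp).trans (T.dist_triangle v u p)

theorem hasNearestPortalBelow_root : T.HasNearestPortalBelow T.root := by
  refine ⟨T.root, T.root_mem, isAncestor_refl _, le_antisymm ?_ (portalDist_le_dist T.root_mem)⟩
  rw [T.dist_self]
  exact zero_le

theorem portalDist_eq_of_not_hasNearestPortalBelow [Finite V] {v : V}
    (h : ¬ T.HasNearestPortalBelow v) :
    T.portalDist v = T.dist v (T.parent v) + T.portalDist (T.parent v) := by
  obtain ⟨q, hq, hvq⟩ := exists_portalDist_eq (T := T) v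
  have hnot : ¬ T.IsAncestor v q := fun hanc => h ⟨q, hq, hanc, hvq.symm⟩
  refine le_antisymm (portalDist_le_dist_add _ _) ?_
  rw [hvq, T.dist_eq_add_of_mem (parent_mem_support_path hnot)]
  exact add_le_add le_rfl (portalDist_le_dist hq)

theorem exists_isAncestor_hasNearestPortalBelow [Finite V] (v : V) :
    ∃ a, T.IsAncestor a v ∧ T.HasNearestPortalBelow a ∧
      T.portalDist v = T.dist v a + T.portalDist a := by
  induction hd : T.depth v using Nat.strong_induction_on generalizing v with
  | _ n ih =>
    by_cases hv : T.HasNearestPortalBelow v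
    · exact ⟨v, isAncestor_refl v, hv, by rw [T.dist_self, zero_add]⟩
    have hroot : v ≠ T.root := fun h => hv (h ▸ hasNearestPortalBelow_root)
    obtain ⟨a, ha, hna, hda⟩ :=
      ih _ (by rw [← hd, depth_parent hroot]; omega) (T.parent v) rfl
    refine ⟨a, isAncestor_trans (isAncestor_parent v) ha, hna, ?_⟩
    rw [portalDist_eq_of_not_hasNearestPortalBelow hv, hda,
      dist_eq_add_of_isAncestor (isAncestor_parent v) ha, add_assoc]

theorem dist_eq_portalDist_of_isAncestor [Finite V] {y z q : V} (hq : q ∈ T.portals)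
    (hyq : T.dist y q = T.portalDist y) (hyz : T.IsAncestor y z) (hzq : T.IsAncestor z q) :
    T.dist z q = T.portalDist z := by
  refine le_antisymm ?_ (portalDist_le_dist hq)
  have h : T.dist y z + T.dist z q ≤ T.dist y z + T.portalDist z := by
    rw [← dist_eq_add_of_isAncestor' hzq hyz, hyq]
    exact portalDist_le_dist_add y z
  exact (ENNReal.add_le_add_iff_left (T.dist_lt_top y z).ne).mp h

end PortalTree

structure ClusteredTree (V ι : Type*) extends PortalTree V where
  cluster : V → ι
  Δ : ENNReal
  Δ_lt_top : Δ < ⊤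
  gdist_le_Δ : ∀ u v, cluster u = cluster v →
    gdist weight {x | cluster x = cluster v} u v ≤ Δ

namespace ClusteredTree

open RootedWeightedTree PortalTree
open scoped Classical

variable {V ι : Type*} (C : ClusteredTree V ι)

theorem cluster_eq_of_mem_path {u v z : V} (h : C.cluster u = C.cluster v)
    (hz : z ∈ (C.path u v).support) : C.cluster z = C.cluster v :=
  C.support_path_subset_of_gdist_ne_top
    (ne_top_of_le_ne_top C.Δ_lt_top.ne (C.gdist_le_Δ u v h)) z hz

theorem dist_le_Δ {u v : V} (h : C.cluster u = C.cluster v) : C.dist u v ≤ C.Δ :=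
  (C.dist_le_gdist _ u v).trans (C.gdist_le_Δ u v h)

variable [Finite V]

noncomputable def top (i : ι) : V :=
  if h : ∃ x, C.cluster x = i then
    (Set.exists_min_image {x | C.cluster x = i} C.depth (Set.toFinite _) h).choose
  else C.root

variable {C}

theorem top_spec {i : ι} (hi : ∃ x, C.cluster x = i) :
    C.cluster (C.top i) = i ∧ ∀ x, C.cluster x = i → C.depth (C.top i) ≤ C.depth x := by
  rw [top, dif_pos hi]
  exact (Set.exists_min_image {x | C.cluster x = i} C.depth (Set.toFinite _) hi).choose_spec

theorem isAncestor_top {i : ι} {x : V} (hx : C.cluster x = i) : C.IsAncestor (C.top i) x := by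
  obtain ⟨htop, hmin⟩ := top_spec ⟨x, hx⟩
  refine isAncestor_of_forall_depth_le (A := {x | C.cluster x = i}) hmin ?_ hx
  intro x hx z hz
  exact (C.cluster_eq_of_mem_path (hx.trans htop.symm) hz).trans htop

variable (C)

noncomputable def entryCost (i : ι) : ENNReal :=
  ⨅ (y) (_ : C.cluster y = i ∧ C.HasNearestPortalBelow y), C.dist (C.top i) y + C.portalDist y

def IsGrounded (i : ι) : Prop := C.entryCost i ≤ C.portalDist (C.top i) + 2 * C.Δ

noncomputable def budget (i : ι) : ENNReal :=
  min (C.entryCost i) (C.portalDist (C.top i) + 2 * C.Δ)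

noncomputable def anchor (i : ι) : V :=
  if h : {y | C.cluster y = i ∧ C.HasNearestPortalBelow y}.Nonempty then
    (Set.exists_min_image _ (fun y => C.dist (C.top i) y + C.portalDist y) (Set.toFinite _)
      h).choose
  else C.root

noncomputable def target (i : ι) : V :=
  if h : C.HasNearestPortalBelow (C.anchor i) then h.choose else C.root

noncomputable def exit (i : ι) : V :=
  if h : {z | C.IsAncestor (C.anchor i) z ∧ C.IsAncestor z (C.target i) ∧
      C.cluster z ≠ i}.Nonempty then
    (Set.exists_min_image _ C.depth (Set.toFinite _) h).choose
  else C.root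

variable {C}

theorem entryCost_le {i : ι} {y : V} (hy : C.cluster y = i) (hny : C.HasNearestPortalBelow y) :
    C.entryCost i ≤ C.dist (C.top i) y + C.portalDist y :=
  iInf₂_le y ⟨hy, hny⟩

theorem budget_eq_of_isGrounded {i : ι} (hg : C.IsGrounded i) : C.budget i = C.entryCost i :=
  min_eq_left hg

theorem budget_eq_of_not_isGrounded {i : ι} (hg : ¬ C.IsGrounded i) :
    C.budget i = C.portalDist (C.top i) + 2 * C.Δ :=
  min_eq_right (not_le.mp hg).le

theorem anchor_spec {i : ι} (hg : C.IsGrounded i) :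
    C.cluster (C.anchor i) = i ∧ C.HasNearestPortalBelow (C.anchor i) ∧
      C.entryCost i = C.dist (C.top i) (C.anchor i) + C.portalDist (C.anchor i) := by
  have hne : {y | C.cluster y = i ∧ C.HasNearestPortalBelow y}.Nonempty := by
    by_contra hempty
    have htop : C.entryCost i = ⊤ := iInf₂_eq_top.mpr fun y hy => absurd ⟨y, hy⟩ hempty
    have hlt : C.portalDist (C.top i) + 2 * C.Δ < ⊤ :=
      ENNReal.add_lt_top.mpr ⟨portalDist_lt_top _, ENNReal.mul_lt_top (by norm_num) C.Δ_lt_top⟩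
    exact (hg.trans_lt hlt).ne htop
  rw [anchor, dif_pos hne]
  obtain ⟨hmem, hmin⟩ := (Set.exists_min_image _ (fun y => C.dist (C.top i) y + C.portalDist y)
    (Set.toFinite _) hne).choose_spec
  exact ⟨hmem.1, hmem.2, le_antisymm (entryCost_le hmem.1 hmem.2) (le_iInf₂ hmin)⟩

theorem target_spec {i : ι} (hg : C.IsGrounded i) :
    C.target i ∈ C.portals ∧ C.IsAncestor (C.anchor i) (C.target i) ∧
      C.dist (C.anchor i) (C.target i) = C.portalDist (C.anchor i) := by
  have h := (anchor_spec hg).2.1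
  rw [target, dif_pos h]
  exact h.choose_spec

theorem exit_spec {i : ι} (hg : C.IsGrounded i) (hq : C.cluster (C.target i) ≠ i) :
    C.IsAncestor (C.anchor i) (C.exit i) ∧ C.IsAncestor (C.exit i) (C.target i) ∧
      C.cluster (C.exit i) ≠ i ∧
      ∀ z, C.IsAncestor (C.anchor i) z → C.IsAncestor z (C.exit i) → z ≠ C.exit i →
        C.cluster z = i := by
  have hne : {z | C.IsAncestor (C.anchor i) z ∧ C.IsAncestor z (C.target i) ∧
      C.cluster z ≠ i}.Nonempty := ⟨C.target i, (target_spec hg).2.1, isAncestor_refl _, hq⟩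
  rw [exit, dif_pos hne]
  obtain ⟨hmem, hmin⟩ := (Set.exists_min_image _ C.depth (Set.toFinite _) hne).choose_spec
  refine ⟨hmem.1, hmem.2.1, hmem.2.2, fun z hyz hzx hne' => ?_⟩
  by_contra hz
  exact absurd (hmin z ⟨hyz, isAncestor_trans hmem.2.1 hzx, hz⟩)
    (not_le.mpr (depth_lt_of_isAncestor hzx hne'))

theorem top_exit {i : ι} (hg : C.IsGrounded i) (hq : C.cluster (C.target i) ≠ i) :
    C.top (C.cluster (C.exit i)) = C.exit i := by
  obtain ⟨hyx, -, hxi, hbetween⟩ := exit_spec hg hq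
  have htx : C.IsAncestor (C.top (C.cluster (C.exit i))) (C.exit i) := isAncestor_top rfl
  have htop := (top_spec (C := C) ⟨C.exit i, rfl⟩).1
  rcases isAncestor_total htx hyx with hty | hyt
  · have hy := C.cluster_eq_of_mem_path htop.symm (mem_support_path_of_isAncestor hyx hty)
    exact absurd (((anchor_spec hg).1.symm.trans hy).trans htop) (Ne.symm hxi)
  · by_contra hne
    exact hxi (htop.symm.trans (hbetween _ hyt htx hne))

theorem dist_exit_target {i : ι} (hg : C.IsGrounded i) (hq : C.cluster (C.target i) ≠ i) :
    C.dist (C.exit i) (C.target i) = C.portalDist (C.exit i) := by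
  obtain ⟨hyx, hxq, -, -⟩ := exit_spec hg hq
  obtain ⟨hqP, -, hyq⟩ := target_spec hg
  exact dist_eq_portalDist_of_isAncestor hqP hyq hyx hxq

theorem dist_anchor_exit_add {i : ι} (hg : C.IsGrounded i) (hq : C.cluster (C.target i) ≠ i) :
    C.dist (C.anchor i) (C.exit i) + C.portalDist (C.exit i) = C.portalDist (C.anchor i) := by
  obtain ⟨hyx, hxq, -, -⟩ := exit_spec hg hq
  rw [← dist_exit_target hg hq, ← dist_eq_add_of_isAncestor' hxq hyx, (target_spec hg).2.2]

theorem entryCost_exit_le {i : ι} (hg : C.IsGrounded i) (hq : C.cluster (C.target i) ≠ i) :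
    C.entryCost (C.cluster (C.exit i)) ≤ C.portalDist (C.exit i) := by
  obtain ⟨-, hxq, -, -⟩ := exit_spec hg hq
  have h := entryCost_le rfl ⟨C.target i, (target_spec hg).1, hxq, dist_exit_target hg hq⟩
  rwa [top_exit hg hq, C.dist_self, zero_add] at h

theorem isGrounded_exit {i : ι} (hg : C.IsGrounded i) (hq : C.cluster (C.target i) ≠ i) :
    C.IsGrounded (C.cluster (C.exit i)) := by
  rw [IsGrounded, top_exit hg hq]
  exact (entryCost_exit_le hg hq).trans le_self_add

theorem not_hasNearestPortalBelow_top {i : ι} (hi : ∃ x, C.cluster x = i)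
    (hg : ¬ C.IsGrounded i) : ¬ C.HasNearestPortalBelow (C.top i) := fun h =>
  hg ((entryCost_le (top_spec hi).1 h).trans (by rw [C.dist_self, zero_add]; exact le_self_add))

variable (C) in
/-- Grounded clusters rank below all others; `assign` recurses from a grounded cluster to a
deeper grounded one, and from any other cluster to a shallower one. -/
noncomputable def rank (i : ι) : ℕ :=
  if C.IsGrounded i then Nat.card V - C.depth (C.top i) else Nat.card V + 1 + C.depth (C.top i)

theorem rank_le (i : ι) : C.rank i ≤ Nat.card V + 1 + C.depth (C.top i) := by
  unfold rank; split_ifs <;> omega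

theorem rank_exit_lt {i : ι} (hg : C.IsGrounded i) (hq : C.cluster (C.target i) ≠ i) :
    C.rank (C.cluster (C.exit i)) < C.rank i := by
  obtain ⟨hyx, -, hxi, -⟩ := exit_spec hg hq
  have hy := (anchor_spec hg).1
  have h₁ := depth_le_of_isAncestor (isAncestor_top hy)
  have h₂ := depth_lt_of_isAncestor hyx fun h => hxi (h ▸ hy)
  have h₃ := C.depth_lt_card (C.exit i)
  rw [rank, rank, if_pos (isGrounded_exit hg hq), if_pos hg, top_exit hg hq]
  omega

theorem rank_parent_lt {i : ι} (hi : ∃ x, C.cluster x = i) (hg : ¬ C.IsGrounded i) :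
    C.rank (C.cluster (C.parent (C.top i))) < C.rank i := by
  have hroot : C.top i ≠ C.root := fun h =>
    not_hasNearestPortalBelow_top hi hg (h ▸ hasNearestPortalBelow_root)
  have h₁ := depth_parent hroot
  have h₂ := depth_le_of_isAncestor (isAncestor_top (i := C.cluster (C.parent (C.top i))) rfl)
  have h₃ := rank_le (C := C) (C.cluster (C.parent (C.top i)))
  have h₄ : C.rank i = Nat.card V + 1 + C.depth (C.top i) := if_neg hg
  omega

variable (C) in
noncomputable def assign (i : ι) : V :=
  if _ : ∃ x, C.cluster x = i then
    if _ : C.IsGrounded i then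
      if _ : C.cluster (C.target i) = i then C.target i
      else assign (C.cluster (C.exit i))
    else assign (C.cluster (C.parent (C.top i)))
  else C.root
termination_by C.rank i
decreasing_by
  · exact rank_exit_lt ‹_› ‹_›
  · exact rank_parent_lt ‹_› ‹_›

variable (C) in
def coarse (i : ι) : Set V := {x | C.assign (C.cluster x) = C.assign i}

theorem mem_coarse {i : ι} {x : V} (hx : C.cluster x = i) : x ∈ C.coarse i :=
  congrArg C.assign hx

theorem coarse_congr {i j : ι} (h : C.assign i = C.assign j) : C.coarse i = C.coarse j := by
  rw [coarse, coarse, h]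

theorem assign_of_exit {i : ι} (hg : C.IsGrounded i) (hq : C.cluster (C.target i) ≠ i) :
    C.assign i = C.assign (C.cluster (C.exit i)) := by
  rw [assign, dif_pos ⟨_, (anchor_spec hg).1⟩, dif_pos hg, dif_neg hq]

theorem assign_of_not_isGrounded {i : ι} (hi : ∃ x, C.cluster x = i) (hg : ¬ C.IsGrounded i) :
    C.assign i = C.assign (C.cluster (C.parent (C.top i))) := by
  rw [assign, dif_pos hi, dif_neg hg]

/-- Either a shortest way from `v` to the portals leaves the cluster of `v` through its top, or it
turns down inside the cluster, at a vertex that competes in `entryCost`. -/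
theorem dist_top_add_budget_le (v : V) :
    C.dist v (C.top (C.cluster v)) + C.budget (C.cluster v) ≤ C.portalDist v + 2 * C.Δ := by
  set t := C.top (C.cluster v)
  have ht : C.cluster t = C.cluster v := (top_spec ⟨v, rfl⟩).1
  have htv : C.IsAncestor t v := isAncestor_top rfl
  obtain ⟨a, hav, ha, hda⟩ := exists_isAncestor_hasNearestPortalBelow (T := C.toPortalTree) v
  rcases isAncestor_total htv hav with hta | hat
  · have hcl : C.cluster a = C.cluster v :=
      (C.cluster_eq_of_mem_path ht.symm (mem_support_path_of_isAncestor hav hta)).trans ht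
    calc C.dist v t + C.budget (C.cluster v)
        ≤ (C.dist v a + C.dist a t) + (C.dist t a + C.portalDist a) := by
          rw [← dist_eq_add_of_isAncestor hav hta]
          exact add_le_add le_rfl ((min_le_left _ _).trans (entryCost_le hcl ha))
      _ = (C.dist v a + C.portalDist a) + (C.dist a t + C.dist t a) := by ring
      _ ≤ C.portalDist v + 2 * C.Δ := by
          rw [← hda, two_mul]
          gcongr
          · exact C.dist_le_Δ (hcl.trans ht.symm)
          · exact C.dist_le_Δ (ht.trans hcl.symm)
  · calc C.dist v t + C.budget (C.cluster v)
        ≤ C.dist v t + (C.portalDist t + 2 * C.Δ) := add_le_add le_rfl (min_le_right _ _)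
      _ ≤ C.dist v t + (C.dist t a + C.portalDist a + 2 * C.Δ) := by
          gcongr; exact portalDist_le_dist_add t a
      _ = C.portalDist v + 2 * C.Δ := by
          rw [hda, dist_eq_add_of_isAncestor htv hat]; ring

theorem gdist_le_of_budget {j : ι} {x : V} (hx : C.cluster x = j)
    (h : gdist C.weight (C.coarse j) (C.top j) (C.assign j) ≤ C.budget j) :
    gdist C.weight (C.coarse j) x (C.assign j) ≤ C.portalDist x + 2 * C.Δ := by
  subst hx
  have ht := (top_spec (C := C) ⟨x, rfl⟩).1
  calc gdist C.weight (C.coarse (C.cluster x)) x (C.assign (C.cluster x))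
      ≤ C.dist x (C.top (C.cluster x)) +
          gdist C.weight (C.coarse (C.cluster x)) (C.top (C.cluster x)) (C.assign (C.cluster x)) :=
        C.gdist_le_cost_add _ fun z hz =>
          mem_coarse ((C.cluster_eq_of_mem_path ht.symm hz).trans ht)
    _ ≤ C.dist x (C.top (C.cluster x)) + C.budget (C.cluster x) := add_le_add le_rfl h
    _ ≤ C.portalDist x + 2 * C.Δ := dist_top_add_budget_le x

theorem gdist_top_target_le {i : ι} (hg : C.IsGrounded i) (hq : C.cluster (C.target i) = i) :
    gdist C.weight (C.coarse i) (C.top i) (C.target i) ≤ C.budget i := by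
  obtain ⟨hy, -, hcost⟩ := anchor_spec hg
  have ht := (top_spec (C := C) ⟨_, hy⟩).1
  calc gdist C.weight (C.coarse i) (C.top i) (C.target i) ≤ C.dist (C.top i) (C.target i) :=
        C.gdist_le_cost fun z hz =>
          mem_coarse ((C.cluster_eq_of_mem_path (ht.trans hq.symm) hz).trans hq)
    _ ≤ C.dist (C.top i) (C.anchor i) + C.dist (C.anchor i) (C.target i) := C.dist_triangle _ _ _
    _ = C.budget i := by rw [(target_spec hg).2.2, ← hcost, budget_eq_of_isGrounded hg]

theorem gdist_top_le_of_exit {i : ι} (hg : C.IsGrounded i) (hq : C.cluster (C.target i) ≠ i)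
    (ih : gdist C.weight (C.coarse (C.cluster (C.exit i))) (C.top (C.cluster (C.exit i)))
      (C.assign (C.cluster (C.exit i))) ≤ C.budget (C.cluster (C.exit i))) :
    gdist C.weight (C.coarse i) (C.top i) (C.assign (C.cluster (C.exit i))) ≤ C.budget i := by
  set j := C.cluster (C.exit i)
  rw [top_exit hg hq] at ih
  obtain ⟨hyx, -, -, hbetween⟩ := exit_spec hg hq
  obtain ⟨hy, -, hcost⟩ := anchor_spec hg
  have ht := (top_spec (C := C) ⟨_, hy⟩).1
  have hS : C.coarse i = C.coarse j := coarse_congr (assign_of_exit hg hq)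
  have hwalk : ∀ z ∈ ((C.path (C.top i) (C.anchor i)).append
      (C.path (C.anchor i) (C.exit i))).support, z ∈ C.coarse i := by
    intro z hz
    rcases (Walk.mem_support_append_iff _ _).mp hz with hz | hz
    · exact mem_coarse ((C.cluster_eq_of_mem_path (ht.trans hy.symm) hz).trans hy)
    · obtain ⟨hyz, hzx⟩ := isAncestor_of_mem_support_path hyx (C.mem_support_path_comm.mp hz)
      by_cases hzx' : z = C.exit i
      · rw [hS, hzx']
        exact mem_coarse rfl
      · exact mem_coarse (hbetween z hyz hzx hzx')
  calc gdist C.weight (C.coarse i) (C.top i) (C.assign j)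
      ≤ C.dist (C.top i) (C.anchor i) + C.dist (C.anchor i) (C.exit i) +
          gdist C.weight (C.coarse j) (C.exit i) (C.assign j) := by
        rw [← hS]
        exact (C.gdist_le_cost_add _ hwalk).trans_eq (by rw [C.cost_append]; rfl)
    _ ≤ C.dist (C.top i) (C.anchor i) + C.dist (C.anchor i) (C.exit i) +
          C.portalDist (C.exit i) := by
        gcongr
        exact ih.trans ((min_le_left _ _).trans (entryCost_exit_le hg hq))
    _ = C.budget i := by
        rw [add_assoc, dist_anchor_exit_add hg hq, ← hcost, budget_eq_of_isGrounded hg]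

theorem gdist_top_le_of_not_isGrounded {i : ι} (hi : ∃ x, C.cluster x = i)
    (hg : ¬ C.IsGrounded i)
    (ih : gdist C.weight (C.coarse (C.cluster (C.parent (C.top i))))
      (C.top (C.cluster (C.parent (C.top i)))) (C.assign (C.cluster (C.parent (C.top i)))) ≤
        C.budget (C.cluster (C.parent (C.top i)))) :
    gdist C.weight (C.coarse i) (C.top i) (C.assign (C.cluster (C.parent (C.top i)))) ≤
      C.budget i := by
  have ht := (top_spec hi).1
  have hnt := not_hasNearestPortalBelow_top hi hg
  set t := C.top i
  set j := C.cluster (C.parent t)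
  have hroot : t ≠ C.root := fun h => hnt (by rw [h]; exact hasNearestPortalBelow_root)
  obtain ⟨hadj, -⟩ := path_root_eq_cons hroot
  have hS : C.coarse i = C.coarse j := coarse_congr (assign_of_not_isGrounded hi hg)
  have hedge : ∀ z ∈ (Walk.cons hadj Walk.nil).support, z ∈ C.coarse i := by
    intro z hz
    rcases List.mem_pair.mp (by simpa using hz) with rfl | rfl
    · exact mem_coarse ht
    · exact hS ▸ mem_coarse rfl
  calc gdist C.weight (C.coarse i) t (C.assign j)
      ≤ C.dist t (C.parent t) + gdist C.weight (C.coarse j) (C.parent t) (C.assign j) := by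
        rw [C.dist_of_adj hadj, ← hS]
        simpa using C.gdist_le_cost_add (C.assign j) hedge
    _ ≤ C.dist t (C.parent t) + (C.portalDist (C.parent t) + 2 * C.Δ) :=
        add_le_add le_rfl (gdist_le_of_budget rfl ih)
    _ = C.budget i := by
        rw [budget_eq_of_not_isGrounded hg, portalDist_eq_of_not_hasNearestPortalBelow hnt,
          add_assoc]

theorem assign_spec (i : ι) :
    C.assign i ∈ C.portals ∧
      ((∃ x, C.cluster x = i) →
        gdist C.weight (C.coarse i) (C.top i) (C.assign i) ≤ C.budget i) := by
  fun_induction C.assign i with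
  | case1 i _ hg hq => exact ⟨(target_spec hg).1, fun _ => gdist_top_target_le hg hq⟩
  | case2 i _ hg hq ih => exact ⟨ih.1, fun _ => gdist_top_le_of_exit hg hq (ih.2 ⟨_, rfl⟩)⟩
  | case3 i hi hg ih =>
    exact ⟨ih.1, fun _ => gdist_top_le_of_not_isGrounded hi hg (ih.2 ⟨_, rfl⟩)⟩
  | case4 i hi => exact ⟨C.root_mem, fun h => absurd h hi⟩

theorem gdist_assign_le (v : V) :
    gdist C.weight (C.coarse (C.cluster v)) v (C.assign (C.cluster v)) ≤
      C.portalDist v + 2 * C.Δ :=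
  gdist_le_of_budget rfl ((assign_spec _).2 ⟨v, rfl⟩)

end ClusteredTree

theorem stmt9_general {V : Type*} [Fintype V]
    (T : SimpleGraph V) (hT : T.IsTree)
    (w : V → V → ENNReal)
    (hwE : ∀ u v, ¬ T.Adj u v → w u v = ⊤)
    (hwE' : ∀ u v, T.Adj u v → w u v < ⊤)
    {ι : Type*} (cl : V → ι) (P : Set V) (hP : P.Nonempty)
    (Δ : ENNReal) (hΔ : Δ < ⊤)
    (hdiam : ∀ u v : V, cl u = cl v → gdist w {x | cl x = cl v} u v ≤ Δ) :
    ∃ f : ι → V, (∀ i, f i ∈ P) ∧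
      (∀ v : V, gdist w {x | f (cl x) = f (cl v)} v (f (cl v)) ≤
        (⨅ p ∈ P, gdist w Set.univ v p) + 4 * Δ) ∧
      (∀ v : V, gdist w {x | f (cl x) = f (cl v)} v (f (cl v)) < ⊤) := by
  let C : ClusteredTree V ι :=
    { graph := T, isTree := hT, weight := w, weight_eq_top := hwE, weight_lt_top := hwE',
      root := hP.some, portals := P, root_mem := hP.some_mem,
      cluster := cl, Δ := Δ, Δ_lt_top := hΔ, gdist_le_Δ := hdiam }
  refine ⟨C.assign, fun i => (C.assign_spec i).1, fun v => ?_, fun v => ?_⟩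
  · calc gdist w {x | C.assign (cl x) = C.assign (cl v)} v (C.assign (cl v))
        ≤ C.portalDist v + 2 * Δ := C.gdist_assign_le v
      _ ≤ (⨅ p ∈ P, gdist w Set.univ v p) + 4 * Δ := by
        gcongr
        · exact iInf₂_mono fun p _ => C.dist_le_gdist Set.univ v p
        · norm_num
  · exact (C.gdist_assign_le v).trans_lt (ENNReal.add_lt_top.mpr
      ⟨PortalTree.portalDist_lt_top v, ENNReal.mul_lt_top (by norm_num) hΔ⟩)

/-- Every instance of cluster aggregation on a weighted tree (partition
    into connected clusters of strong diameter ≤ Δ, given by the cluster map `cl`,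
    with portals P) admits a solution f of additive distortion at most 4Δ, whose
    coarse clusters f⁻¹(p) are connected (every vertex reaches its portal within its
    coarse cluster at finite distance). -/
theorem stmt9 {V : Type*} [Fintype V] [Nonempty V]
    (T : SimpleGraph V) (hT : T.IsTree)
    (w : V → V → ENNReal)
    (hwsymm : ∀ u v, w u v = w v u)
    (hwE : ∀ u v, ¬ T.Adj u v → w u v = ⊤)
    (hwE' : ∀ u v, T.Adj u v → w u v < ⊤)
    {ι : Type*} (cl : V → ι) (P : Set V) (hP : P.Nonempty)
    (Δ : ENNReal) (hΔ : Δ < ⊤)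
    (hdiam : ∀ u v : V, cl u = cl v → gdist w {x | cl x = cl v} u v ≤ Δ) :
    ∃ f : ι → V, (∀ i, f i ∈ P) ∧
      (∀ v : V, gdist w {x | f (cl x) = f (cl v)} v (f (cl v)) ≤
        (⨅ p ∈ P, gdist w Set.univ v p) + 4 * Δ) ∧
      (∀ v : V, gdist w {x | f (cl x) = f (cl v)} v (f (cl v)) < ⊤) :=
  stmt9_general T hT w hwE hwE' cl P hP Δ hΔ hdiam
end

section
/- Let G be a weighted graph with partition 𝒞 into clusters of strong diameter at most Δ, and let f be a partial assignment of clusters to portals. Suppose a vertex v lies in cluster C_i that is assigned to portal p because some vertex w ∈ C_i lies on a path π from a vertex to p whose suffix from w to an already-assigned vertex x satisfies d_G(w, x) + d_G(x, P) = d_G(w, P), and x satisfies d_{G[f^{-1}(p)]}(x, p) ≤ d_G(x, P) + K, and all of π from w to x lies in f^{-1}(p). Then d_{G[f^{-1}(p)]}(v, p) ≤ d_G(v, P) + K + 2Δ. -/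
/-- Inductive step of the detour analysis of the general-graph cluster
    aggregation.  dG is the global shortest-path distance, dCi the distance inside
    cluster C_i (of strong diameter ≤ Δ, contained in f⁻¹(p)), dA the distance inside
    f⁻¹(p), and dP x stands for d_G(x,P).  If w ∈ C_i lies on a path to p whose suffix
    from w to an already-assigned vertex x is a shortest path towards P lying in f⁻¹(p),
    and x has detour at most K, then v ∈ C_i has
    dA(v,p) ≤ dP(v) + K + 2Δ. -/
theorem stmt15 {V : Type*} (dG dCi dA : V → V → ℝ) (dP : V → ℝ)
    (hsymmG : ∀ x y, dG x y = dG y x)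
    (hPtri : ∀ x y, dP x ≤ dG x y + dP y)
    (Δ K : ℝ)
    (v w x p : V)
    (hGA : dG v w ≤ dA v w)          -- induced distance dominates the global one
    (hCiA : dA v w ≤ dCi v w)        -- C_i ⊆ f⁻¹(p)
    (hdiam : dCi v w ≤ Δ)            -- strong diameter of C_i
    (hwx : dA w x = dG w x)          -- the suffix of π from w to x lies inside f⁻¹(p)
    (hshort : dG w x + dP x = dP w)  -- shortest path towards P passes through x
    (hx : dA x p ≤ dP x + K)         -- induction hypothesis for x
    (htriA : dA v p ≤ dA v w + dA w x + dA x p) :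
    dA v p ≤ dP v + K + 2 * Δ := by
  have h1 := hPtri w v
  have h2 := hsymmG v w
  linarith
end

section
/- Fix γ = 2β(2α+1). Suppose for every level i, the partition 𝒞_i has strong diameter γ^i, we construct a Δ_i-covering (α, τ)-sparse dangling net N_i with Δ_i = 2αβ·γ^i, and solve cluster aggregation on G+N_i with portals N_i and clusters 𝒞_i with additive distortion β·γ^i. Then the resulting coarsened partition 𝒞_{i+1} has strong diameter at most γ^{i+1} = 2β(2α+1)·γ^i. -/
/-- With γ = 2β(2α+1), if the dangling net N is Δ_i-covering with
    Δ_i = 2αβ·γ^i and the cluster aggregation solution f on G+N_i has additive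
    distortion β·γ^i, then every coarsened cluster f⁻¹(t) has strong diameter at most
    γ^{i+1} = 2β(2α+1)·γ^i.  Here dIn S is the induced shortest-path distance inside
    the vertex set S, dN v the distance of v to the net N, and f assigns each vertex
    its portal. -/
theorem stmt18 {W : Type*} (dIn : Set W → W → W → ℝ)
    (hsymm : ∀ (S : Set W) (u v : W), dIn S u v = dIn S v u)
    (htri : ∀ (S : Set W) (u v x : W), dIn S u v ≤ dIn S u x + dIn S x v)
    (α β γ : ℝ) (hα : 0 < α) (hβ : 0 < β) (hγ : γ = 2 * β * (2 * α + 1))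
    (i : ℕ) (N : Set W) (f : W → W) (hfN : ∀ v, f v ∈ N)
    (dN : W → ℝ)
    (hcover : ∀ v : W, dN v ≤ 2 * α * β * γ ^ i)
    (hdist : ∀ v : W, dIn {u | f u = f v} v (f v) ≤ dN v + β * γ ^ i) :
    ∀ u v : W, f u = f v → dIn {x | f x = f u} u v ≤ γ ^ (i + 1) := by
  intro u v huv
  have h1 := hdist u
  have h2 := hdist v
  rw [← huv] at h2
  have key := htri {x | f x = f u} u v (f u)
  rw [hsymm {x | f x = f u} (f u) v] at key
  have := hcover u
  have := hcover v
  have hgpos : 0 ≤ γ ^ i := pow_nonneg (by rw [hγ]; positivity) i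
  calc dIn {x | f x = f u} u v ≤ _ := key
    _ ≤ (2*α*β*γ^i + β*γ^i) + (2*α*β*γ^i + β*γ^i) := by
        gcongr <;> [exact h1.trans (by linarith); exact h2.trans (by linarith)]
    _ = γ ^ (i+1) := by rw [pow_succ, hγ]; ring
end
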